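/- Let m be even. A symmetric tensor A of order m and dimension n is strictly copositive if and only if there exists γ ≥ 0 such that A x^m + γ ‖x⁺‖^m > 0 for all x ∈ ℝ^n with ‖x‖ = 1. -/
import Mathlib


open Finset

/-- `A x^m` for an `m`-order `n`-dimensional tensor `A`. -/
noncomputable def tpow {m n : ℕ} (A : (Fin m → Fin n) → ℝ) (x : Fin n → ℝ) : ℝ :=
  ∑ f : Fin m → Fin n, A f * ∏ k, x (f k)

/-- `A` is symmetric: entries invariant under permutations of indices. -/
def SymT {m n : ℕ} (A : (Fin m → Fin n) → ℝ) : Prop :=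
  ∀ (σ : Equiv.Perm (Fin m)) (f : Fin m → Fin n), A (f ∘ σ) = A f

/-- `A` is copositive. -/
def CoposT {m n : ℕ} (A : (Fin m → Fin n) → ℝ) : Prop :=
  ∀ x : Fin n → ℝ, (∀ i, 0 ≤ x i) → 0 ≤ tpow A x

/-- `A` is strictly copositive. -/
def StrictCoposT {m n : ℕ} (A : (Fin m → Fin n) → ℝ) : Prop :=
  ∀ x : Fin n → ℝ, (∀ i, 0 ≤ x i) → x ≠ 0 → 0 < tpow A x

lemma tpow_smul' {m n : ℕ} (A : (Fin m → Fin n) → ℝ) (c : ℝ) (x : Fin n → ℝ) :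
    tpow A (c • x) = c ^ m * tpow A x := by
  unfold tpow
  rw [Finset.mul_sum]
  refine Finset.sum_congr rfl fun f _ => ?_
  have : ∏ k, (c • x) (f k) = c ^ m * ∏ k, x (f k) := by
    simp only [Pi.smul_apply, smul_eq_mul, Finset.prod_mul_distrib, Finset.prod_const,
      Finset.card_univ, Fintype.card_fin]
  rw [this]; ring

lemma tpow_cont' {m n : ℕ} (A : (Fin m → Fin n) → ℝ) :
    Continuous (fun x : Fin n → ℝ => tpow A x) := by
  unfold tpow
  exact continuous_finset_sum _ fun f _ =>
    continuous_const.mul <| continuous_finset_prod _ fun k _ => continuous_apply (f k)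

lemma tpow_neg' {m n : ℕ} (hme : Even m) (A : (Fin m → Fin n) → ℝ) (x : Fin n → ℝ) :
    tpow A (-x) = tpow A x := by
  have : (-x : Fin n → ℝ) = (-1 : ℝ) • x := by funext i; simp
  rw [this, tpow_smul', hme.neg_one_pow, one_mul]

theorem stmt6 {m n : ℕ} (hm : 0 < m) (hme : Even m) (A : (Fin m → Fin n) → ℝ)
    (hA : SymT A) :
    StrictCoposT A ↔
      ∃ γ : ℝ, 0 ≤ γ ∧ ∀ x : Fin n → ℝ, ‖x‖ = 1 →
        0 < tpow A x + γ * ‖(fun i => max (x i) 0 : Fin n → ℝ)‖ ^ m := by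
  constructor
  · intro hcop
    -- continuity
    have hf := tpow_cont' A
    have hgc : Continuous (fun x : Fin n → ℝ => ‖(fun i => max (x i) 0 : Fin n → ℝ)‖) :=
      (continuous_pi fun i => (continuous_apply i).max continuous_const).norm
    set g : (Fin n → ℝ) → ℝ := fun x => ‖(fun i => max (x i) 0 : Fin n → ℝ)‖ ^ m with hgdef
    have hg : Continuous g := hgc.pow m
    have hgnn : ∀ x, 0 ≤ g x := fun x => pow_nonneg (norm_nonneg _) m
    set S := Metric.sphere (0 : Fin n → ℝ) 1 with hS
    have hScompact : IsCompact S := isCompact_sphere 0 1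
    have hmemS : ∀ x : Fin n → ℝ, x ∈ S ↔ ‖x‖ = 1 := by
      intro x; simp [hS, mem_sphere_zero_iff_norm]
    set K := S ∩ {x | tpow A x ≤ 0} with hK
    have hKcompact : IsCompact K :=
      hScompact.inter_right (isClosed_le hf continuous_const)
    rcases Set.eq_empty_or_nonempty K with hKe | hKne
    · refine ⟨0, le_refl 0, fun x hx => ?_⟩
      have hxS : x ∈ S := (hmemS x).2 hx
      have : ¬ tpow A x ≤ 0 := by
        intro h
        exact Set.eq_empty_iff_forall_notMem.1 hKe x ⟨hxS, h⟩
      push_neg at this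
      have := hgnn x
      simp only [hgdef] at this ⊢
      linarith
    · -- min of g on K
      obtain ⟨x₀, hx₀K, hx₀min⟩ := hKcompact.exists_isMinOn hKne hg.continuousOn
      set δ := g x₀ with hδ
      have hx₀S : x₀ ∈ S := hx₀K.1
      have hx₀ne : x₀ ≠ 0 := by
        intro h
        have := (hmemS x₀).1 hx₀S
        rw [h] at this; simp at this
      have hδpos : 0 < δ := by
        rcases lt_or_eq_of_le (hgnn x₀) with h | h
        · exact h
        · exfalso
          have hnorm0 : ‖(fun i => max (x₀ i) 0 : Fin n → ℝ)‖ = 0 := by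
            by_contra hne
            have : (0:ℝ) < ‖(fun i => max (x₀ i) 0 : Fin n → ℝ)‖ :=
              lt_of_le_of_ne (norm_nonneg _) (Ne.symm hne)
            have h2 := pow_pos this m
            exact h2.ne' h.symm
          have hle : ∀ i, x₀ i ≤ 0 := by
            intro i
            have h0 : (fun i => max (x₀ i) 0 : Fin n → ℝ) = 0 := norm_eq_zero.1 hnorm0
            have := congrFun h0 i
            simp only [Pi.zero_apply] at this
            by_contra hpos
            push_neg at hpos
            rw [max_eq_left hpos.le] at this
            linarith
          have hnegpos : 0 < tpow A (-x₀) :=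
            hcop (-x₀) (fun i => by simpa using hle i) (by simpa using hx₀ne)
          rw [tpow_neg' hme] at hnegpos
          have h2 : tpow A x₀ ≤ 0 := hx₀K.2
          linarith
      -- min of f on S
      obtain ⟨x₁, _, hx₁min⟩ := hScompact.exists_isMinOn
        ⟨x₀, hx₀S⟩ hf.continuousOn
      set c := tpow A x₁ with hc
      refine ⟨(|c| + 1) / δ, by positivity, fun x hx => ?_⟩
      have hxS : x ∈ S := (hmemS x).2 hx
      by_cases hxK : tpow A x ≤ 0
      · have hxKmem : x ∈ K := ⟨hxS, hxK⟩
        have hgx : δ ≤ g x := hx₀min hxKmem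
        have hfx : c ≤ tpow A x := hx₁min hxS
        have hγδ : (|c| + 1) / δ * δ = |c| + 1 := div_mul_cancel₀ _ (ne_of_gt hδpos)
        have hγnn : 0 ≤ (|c| + 1) / δ := by positivity
        have : (|c| + 1) / δ * δ ≤ (|c| + 1) / δ * g x :=
          mul_le_mul_of_nonneg_left hgx hγnn
        have habs : -c ≤ |c| := neg_le_abs c
        simp only [hgdef] at this hγδ ⊢
        linarith
      · push_neg at hxK
        have := hgnn x
        have hγnn : 0 ≤ (|c| + 1) / δ := by positivity
        have : 0 ≤ (|c| + 1) / δ * g x := mul_nonneg hγnn (hgnn x)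
        simp only [hgdef] at this ⊢
        linarith
  · rintro ⟨γ, hγ, hcond⟩ x hx hxne
    have hxnorm : 0 < ‖x‖ := norm_pos_iff.2 hxne
    set y : Fin n → ℝ := (-(‖x‖⁻¹)) • x with hy
    have hynorm : ‖y‖ = 1 := by
      rw [hy, norm_smul, Real.norm_eq_abs, abs_neg, abs_inv, abs_of_pos hxnorm,
        inv_mul_cancel₀ (ne_of_gt hxnorm)]
    have hyplus : (fun i => max (y i) 0 : Fin n → ℝ) = 0 := by
      funext i
      have : y i ≤ 0 := by
        rw [hy]
        simp only [Pi.smul_apply, smul_eq_mul, neg_mul]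
        have : 0 ≤ ‖x‖⁻¹ * x i := mul_nonneg (inv_nonneg.2 hxnorm.le) (hx i)
        linarith
      simp [max_eq_right this]
    have h0 := hcond y hynorm
    rw [hyplus] at h0
    rw [norm_zero, zero_pow hm.ne', mul_zero, add_zero] at h0
    rw [hy, tpow_smul'] at h0
    have hpow : (-(‖x‖⁻¹)) ^ m = (‖x‖⁻¹) ^ m := by
      rw [neg_pow, hme.neg_one_pow, one_mul]
    rw [hpow] at h0
    have hppos : 0 < (‖x‖⁻¹ : ℝ) ^ m := pow_pos (inv_pos.2 hxnorm) m
    nlinarith [h0, hppos]
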